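/- Let X be a parafinite simplicial set with simplicial Hilbert space H, Q_{S,n} = Σ_{i=0}^n (−1)^i S_{n,i} the degeneracy coboundary operator, and H_{SS,n} = Q_{S,n}† Q_{S,n} + Q_{S,n−1} Q_{S,n−1}†. Then H_{SS,n} ≥ 1 (as operators on H_n); in particular ker H_{SS,n} = 0. -/

import Mathlib

structure SimplicialSet where
  X : ℕ → Type
  d : (n : ℕ) → ℕ → X (n+1) → X n
  s : (n : ℕ) → ℕ → X n → X (n+1)
  dd : ∀ (n i j : ℕ), i < j → j ≤ n+2 → ∀ x : X (n+2),
    d n i (d (n+1) j x) = d n (j-1) (d (n+1) i x)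
  ds_lt : ∀ (n i j : ℕ), i < j → j ≤ n+1 → ∀ x : X (n+1),
    d (n+1) i (s (n+1) j x) = s n (j-1) (d n i x)
  ds_eq : ∀ (n j : ℕ), j ≤ n → ∀ x : X n, d n j (s n j x) = x
  ds_eq' : ∀ (n j : ℕ), j ≤ n → ∀ x : X n, d n (j+1) (s n j x) = x
  ds_gt : ∀ (n i j : ℕ), j+1 < i → i ≤ n+2 → ∀ x : X (n+1),
    d (n+1) i (s (n+1) j x) = s n j (d n (i-1) x)
  ss : ∀ (n i j : ℕ), i ≤ j → j ≤ n → ∀ x : X n,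
    s (n+1) i (s n j x) = s (n+1) (j+1) (s n i x)

/-- The degeneracy operator `S_{n,i}` on the simplicial Hilbert space, defined on
the simplex basis by `S_{n,i}|σ⟩ = |s_{n,i} σ⟩`. -/
noncomputable def Sop (G : SimplicialSet) [∀ n, Fintype (G.X n)]
    [∀ n, DecidableEq (G.X n)] (n i : ℕ) :
    EuclideanSpace ℂ (G.X n) →ₗ[ℂ] EuclideanSpace ℂ (G.X (n+1)) :=
  (PiLp.basisFun 2 ℂ (G.X n)).constr ℂ fun σ => EuclideanSpace.single (G.s n i σ) 1

/-- The degeneracy coboundary operator `Q_{S,n} = Σ_{i=0}^n (-1)^i S_{n,i}`. -/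
noncomputable def QS (G : SimplicialSet) [∀ n, Fintype (G.X n)]
    [∀ n, DecidableEq (G.X n)] (n : ℕ) :
    EuclideanSpace ℂ (G.X n) →ₗ[ℂ] EuclideanSpace ℂ (G.X (n+1)) :=
  ∑ i ∈ Finset.range (n+1), ((-1 : ℂ)^i) • Sop G n i

/-- The degeneracy Hodge Laplacian
`H_{SS,n} = Q_{S,n}† Q_{S,n} + Q_{S,n-1} Q_{S,n-1}†`
(second term absent for `n = 0`). -/
noncomputable def HSS (G : SimplicialSet) [∀ n, Fintype (G.X n)]
    [∀ n, DecidableEq (G.X n)] :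
    (n : ℕ) → (EuclideanSpace ℂ (G.X n) →ₗ[ℂ] EuclideanSpace ℂ (G.X n))
  | 0 => LinearMap.adjoint (QS G 0) ∘ₗ QS G 0
  | n+1 => LinearMap.adjoint (QS G (n+1)) ∘ₗ QS G (n+1)
      + QS G n ∘ₗ LinearMap.adjoint (QS G n)

/-!
The simplicial identities make every `s_{n,i}` injective, so `S_{n,i}` is an isometry, and make the
square `s_{n+1,i} s_{n,k} = s_{n+1,k+1} s_{n,i}` (`i ≤ k`) a pullback, which gives
`S_{n+1,i}† S_{n+1,k+1} = S_{n,k} S_{n,i}†`. Expanding the two squares in `H_{SS,n+1}`,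
the mixed terms of `Q_{S,n+1}† Q_{S,n+1}` are the negatives of the terms `S_{n,k} S_{n,i}†`, `i ≤ k`,
of `Q_{S,n} Q_{S,n}†` and of their adjoints, so `H_{SS,n+1} = (n + 2) - Σ_{k ≤ n} S_{n,k} S_{n,k}†`.
Each `S S†` is an orthogonal projection, hence at most `1`, and `H_{SS,n+1} ≥ 1` follows; `H_{SS,0} = S_{0,0}† S_{0,0} = 1`.
-/

section
open Finset

theorem double_sum_range_succ_add_double_sum_range {M : Type*} [AddCommGroup M] (f g : ℕ → ℕ → M) (m : ℕ)
    (hf : ∀ i k, i ≤ k → k < m → f i (k + 1) = -g k i)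
    (hf' : ∀ i k, i ≤ k → k < m → f (k + 1) i = -g i k) :
    ∑ i ∈ range (m + 1), ∑ j ∈ range (m + 1), f i j + ∑ i ∈ range m, ∑ j ∈ range m, g i j
      = ∑ i ∈ range (m + 1), f i i - ∑ k ∈ range m, g k k := by
  induction m with
  | zero => simp
  | succ m ih =>
    have hrow : ∑ i ∈ range (m + 1), f i (m + 1) = -∑ i ∈ range (m + 1), g m i := by
      rw [← sum_neg_distrib]
      exact sum_congr rfl fun i hi => hf i m (by simp at hi; omega) (by omega)
    have hcol : ∑ i ∈ range (m + 1), f (m + 1) i = -∑ i ∈ range (m + 1), g i m := by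
      rw [← sum_neg_distrib]
      exact sum_congr rfl fun i hi => hf' i m (by simp at hi; omega) (by omega)
    have ih := ih (fun i k hik hk => hf i k hik (by omega)) (fun i k hik hk => hf' i k hik (by omega))
    simp only [sum_range_succ (n := m + 1), sum_range_succ (n := m), sum_add_distrib] at hrow hcol ih ⊢
    linear_combination (norm := abel) ih + hrow + hcol

end

section
open Finset
open LinearMap (adjoint)

variable {𝕜 U V W : Type*} [RCLike 𝕜] [NormedAddCommGroup V] [InnerProductSpace 𝕜 V]

theorem LinearMap.ker_eq_bot_of_norm_sq_le_re_inner {H : V →ₗ[𝕜] V}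
    (hH : ∀ y, ‖y‖ ^ 2 ≤ RCLike.re (inner 𝕜 y (H y))) : LinearMap.ker H = ⊥ := by
  refine LinearMap.ker_eq_bot'.mpr fun y hy => ?_
  simpa [hy] using hH y

variable [FiniteDimensional 𝕜 V] [NormedAddCommGroup U] [InnerProductSpace 𝕜 U]
  [FiniteDimensional 𝕜 U]
  [NormedAddCommGroup W] [InnerProductSpace 𝕜 W] [FiniteDimensional 𝕜 W]

theorem norm_adjoint_apply_le_of_adjoint_comp_self_eq_id {T : U →ₗ[𝕜] V}
    (hT : adjoint T ∘ₗ T = LinearMap.id) (y : V) : ‖adjoint T y‖ ≤ ‖y‖ := by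
  set z := adjoint T y
  have hTz : ‖T z‖ = ‖z‖ := by
    rw [@norm_eq_sqrt_re_inner 𝕜, @norm_eq_sqrt_re_inner 𝕜, ← LinearMap.adjoint_inner_right,
      ← LinearMap.comp_apply, hT, LinearMap.id_apply]
  have hz : ‖z‖ ^ 2 ≤ ‖z‖ * ‖y‖ := calc
    ‖z‖ ^ 2 = RCLike.re (inner 𝕜 (T z) y) := by
      rw [← LinearMap.adjoint_inner_right, ← inner_self_eq_norm_sq (𝕜 := 𝕜)]
    _ ≤ ‖T z‖ * ‖y‖ := re_inner_le_norm _ _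
    _ = ‖z‖ * ‖y‖ := by rw [hTz]
  nlinarith [norm_nonneg z, norm_nonneg y]

theorem re_inner_comp_adjoint_le {T : U →ₗ[𝕜] V} (hT : adjoint T ∘ₗ T = LinearMap.id) (y : V) :
    RCLike.re (inner 𝕜 y ((T ∘ₗ adjoint T) y)) ≤ ‖y‖ ^ 2 := by
  rw [LinearMap.comp_apply, ← LinearMap.adjoint_inner_left, inner_self_eq_norm_sq]
  gcongr
  exact norm_adjoint_apply_le_of_adjoint_comp_self_eq_id hT y

theorem norm_sq_le_re_inner_smul_id_sub_sum_comp_adjoint (B : ℕ → U →ₗ[𝕜] V) (m : ℕ)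
    (hB : ∀ k < m, adjoint (B k) ∘ₗ B k = LinearMap.id) (y : V) :
    ‖y‖ ^ 2 ≤ RCLike.re (inner 𝕜 y
      (((m + 1 : 𝕜) • LinearMap.id - ∑ k ∈ range m, B k ∘ₗ adjoint (B k) : V →ₗ[𝕜] V) y)) := by
  have hsum : ∑ k ∈ range m, RCLike.re (inner 𝕜 y ((B k ∘ₗ adjoint (B k)) y)) ≤ m * ‖y‖ ^ 2 := by
    simpa using sum_le_sum fun k hk => re_inner_comp_adjoint_le (hB k (mem_range.mp hk)) y
  have hid : RCLike.re (inner 𝕜 y ((m + 1 : 𝕜) • y)) = (m + 1) * ‖y‖ ^ 2 := by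
    simp [inner_smul_right, inner_self_eq_norm_sq_to_K]
  simp only [LinearMap.sub_apply, LinearMap.smul_apply, LinearMap.id_apply, LinearMap.sum_apply,
    inner_sub_right, inner_sum, map_sub, map_sum, hid]
  linarith

theorem adjoint_alternating_sum (A : ℕ → V →ₗ[𝕜] W) (s : Finset ℕ) :
    adjoint (∑ i ∈ s, (-1 : 𝕜) ^ i • A i) = ∑ i ∈ s, (-1 : 𝕜) ^ i • adjoint (A i) := by
  simp [map_sum, map_smulₛₗ]

theorem alternating_laplacian_eq (A : ℕ → V →ₗ[𝕜] W) (B : ℕ → U →ₗ[𝕜] V) (m : ℕ)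
    (hA : ∀ i ≤ m, adjoint (A i) ∘ₗ A i = LinearMap.id)
    (hAB : ∀ i k, i ≤ k → k < m → adjoint (A i) ∘ₗ A (k + 1) = B k ∘ₗ adjoint (B i)) :
    adjoint (∑ i ∈ range (m + 1), (-1 : 𝕜) ^ i • A i) ∘ₗ (∑ i ∈ range (m + 1), (-1 : 𝕜) ^ i • A i)
      + (∑ i ∈ range m, (-1 : 𝕜) ^ i • B i) ∘ₗ adjoint (∑ i ∈ range m, (-1 : 𝕜) ^ i • B i)
      = (m + 1 : 𝕜) • LinearMap.id - ∑ k ∈ range m, B k ∘ₗ adjoint (B k) := by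
  have hBA : ∀ i k, i ≤ k → k < m → adjoint (A (k + 1)) ∘ₗ A i = B i ∘ₗ adjoint (B k) := by
    intro i k hik hk
    simpa [LinearMap.adjoint_comp] using congrArg adjoint (hAB i k hik hk)
  have sign_sq : ∀ i, (-1 : 𝕜) ^ i * (-1) ^ i = 1 := fun i => by rw [← mul_pow]; simp
  rw [adjoint_alternating_sum, adjoint_alternating_sum]
  ext x
  simp only [LinearMap.add_apply, LinearMap.comp_apply, LinearMap.sub_apply, LinearMap.smul_apply,
    LinearMap.id_apply, LinearMap.sum_apply, map_sum, map_smul, smul_sum, smul_smul]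
  rw [double_sum_range_succ_add_double_sum_range]
  · congr 1
    · calc ∑ i ∈ range (m + 1), ((-1 : 𝕜) ^ i * (-1) ^ i) • adjoint (A i) (A i x)
          = ∑ i ∈ range (m + 1), x := sum_congr rfl fun i hi => by
            rw [sign_sq, one_smul, ← LinearMap.comp_apply, hA i (by simpa [Nat.lt_succ_iff] using hi),
              LinearMap.id_apply]
        _ = (m + 1 : 𝕜) • x := by
            rw [sum_const, card_range, ← Nat.cast_smul_eq_nsmul 𝕜]; push_cast; rfl
    · exact sum_congr rfl fun k _ => by rw [sign_sq, one_smul]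
  · intro i k hik hk
    rw [← LinearMap.comp_apply (adjoint (A (k + 1))), hBA i k hik hk, LinearMap.comp_apply, pow_succ]
    module
  · intro i k hik hk
    rw [← LinearMap.comp_apply (adjoint (A i)), hAB i k hik hk, LinearMap.comp_apply, pow_succ]
    module

end

namespace SimplicialSet
variable (G : SimplicialSet)

theorem s_injective {n i : ℕ} (h : i ≤ n) : Function.Injective (G.s n i) :=
  Function.LeftInverse.injective (G.ds_eq n i h)

theorem s_eq_s_succ_iff {n i k : ℕ} (hik : i ≤ k) (hk : k ≤ n) {ρ τ : G.X (n + 1)} :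
    G.s (n + 1) i ρ = G.s (n + 1) (k + 1) τ ↔ ∃ σ, G.s n i σ = τ ∧ G.s n k σ = ρ := by
  constructor
  · intro h
    have hτ : G.s n i (G.d n (k + 1) ρ) = τ := by
      have := congrArg (G.d (n + 1) (k + 2)) h
      rwa [G.ds_eq' (n + 1) (k + 1) (by omega), G.ds_gt n (k + 2) i (by omega) (by omega)] at this
    have hρ : G.s n k (G.d n i τ) = ρ := by
      have := congrArg (G.d (n + 1) i) h
      rwa [G.ds_eq (n + 1) i (by omega), G.ds_lt n i (k + 1) (by omega) (by omega),
        Nat.add_sub_cancel, eq_comm] at this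
    refine ⟨G.d n i τ, ?_, hρ⟩
    rw [← hτ, G.ds_eq n i (by omega)]
  · rintro ⟨σ, rfl, rfl⟩
    exact G.ss n i k hik hk σ

end SimplicialSet

section
open Finset
open LinearMap (adjoint)
variable (G : SimplicialSet) [∀ n, Fintype (G.X n)] [∀ n, DecidableEq (G.X n)]

theorem Sop_apply (n i : ℕ) (x : EuclideanSpace ℂ (G.X n)) (τ : G.X (n + 1)) :
    Sop G n i x τ = ∑ σ with G.s n i σ = τ, x σ := by
  simp [Sop, Module.Basis.constr_apply_fintype, Finset.sum_filter, Pi.single_apply, @eq_comm _ τ]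

theorem adjoint_Sop_apply (n i : ℕ) (y : EuclideanSpace ℂ (G.X (n + 1))) (σ : G.X n) :
    adjoint (Sop G n i) y σ = y (G.s n i σ) := by
  have hσ := LinearMap.adjoint_inner_right (Sop G n i) (EuclideanSpace.single σ 1) y
  have hsingle : Sop G n i (EuclideanSpace.single σ 1) = EuclideanSpace.single (G.s n i σ) 1 := by
    ext τ; simp [Sop_apply, PiLp.single_apply, eq_comm]
  simpa [hsingle, EuclideanSpace.inner_single_left] using hσ

theorem adjoint_Sop_comp_Sop {n i : ℕ} (h : i ≤ n) :
    adjoint (Sop G n i) ∘ₗ Sop G n i = LinearMap.id := by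
  ext x σ
  simp [adjoint_Sop_apply, Sop_apply, (G.s_injective h).eq_iff, filter_eq']

theorem adjoint_Sop_comp_Sop_succ {n i k : ℕ} (hik : i ≤ k) (hk : k ≤ n) :
    adjoint (Sop G (n + 1) i) ∘ₗ Sop G (n + 1) (k + 1) = Sop G n k ∘ₗ adjoint (Sop G n i) := by
  ext x ρ
  simp only [LinearMap.comp_apply, adjoint_Sop_apply, Sop_apply]
  rw [← sum_image (G.s_injective (n := n) (i := i) (by omega)).injOn]
  congr 1
  ext τ
  rw [mem_filter, eq_comm, G.s_eq_s_succ_iff hik hk]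
  simp [and_comm]

theorem HSS_zero : HSS G 0 = LinearMap.id := by
  simp [HSS, QS, adjoint_Sop_comp_Sop]

theorem HSS_succ (n : ℕ) :
    HSS G (n + 1) = ((n + 1 : ℕ) + 1 : ℂ) • LinearMap.id
      - ∑ k ∈ range (n + 1), Sop G n k ∘ₗ adjoint (Sop G n k) :=
  alternating_laplacian_eq (Sop G (n + 1)) (Sop G n) (n + 1)
    (fun _ hi => adjoint_Sop_comp_Sop G hi) (fun _ _ hik hk => adjoint_Sop_comp_Sop_succ G hik (by omega))

theorem norm_sq_le_re_inner_HSS (n : ℕ) (ψ : EuclideanSpace ℂ (G.X n)) :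
    ‖ψ‖ ^ 2 ≤ (inner ℂ ψ (HSS G n ψ) : ℂ).re := by
  cases n with
  | zero =>
    rw [HSS_zero, LinearMap.id_apply, inner_self_eq_norm_sq_to_K]
    norm_cast
  | succ n =>
    rw [HSS_succ]
    exact norm_sq_le_re_inner_smul_id_sub_sum_comp_adjoint _ _
      (fun _ hk => adjoint_Sop_comp_Sop G (by omega)) ψ

end

/-- The degeneracy Hodge Laplacian satisfies `H_{SS,n} ≥ 1`; in particular its
kernel is trivial. -/
theorem degeneracy_laplacian_ge_one (G : SimplicialSet) [∀ n, Fintype (G.X n)]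
    [∀ n, DecidableEq (G.X n)] (n : ℕ) :
    (∀ ψ : EuclideanSpace ℂ (G.X n), ‖ψ‖^2 ≤ (inner ℂ ψ (HSS G n ψ) : ℂ).re) ∧
    LinearMap.ker (HSS G n) = ⊥ := by
  have h := norm_sq_le_re_inner_HSS G n
  exact ⟨h, LinearMap.ker_eq_bot_of_norm_sq_le_re_inner h⟩
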